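/- Let k be a field and let (d,m,δ,ε) be latent data satisfying additionally δ_{i+2} − δ_{i+3} + ε_i > 0 for all 1 ≤ i ≤ m−3. Consider the (m+1)×m matrix η over k[x,y,z] whose upper 3×m block is lower-bidiagonal with entries x^{d−δ_1}, y^{d−δ_1}, x^{d−δ_2}, y^{d−δ_2}, x^{d−δ_3} in positions (1,1),(2,1),(2,2),(3,2),(3,3), and whose lower (m−2)×m block B has row i (1 ≤ i ≤ m−3) with entries z^{β_{i,i+1}}, y^{β_{i,i+2}}, x^{β_{i,i+3}} in columns i+1, i+2, i+3 (where β_{i,j} = δ_{i+2} − δ_j + ε_i), row m−2 with entries x^{β_{m−2,1}}, z^{β_{m−2,m−1}}, y^{β_{m−2,m}} in columns 1, m−1, m, and zeros elsewhere. Then ht I_m(η) ≥ 2 and ht I_{m−2}(B) ≥ 3, so η is a (d,m,δ,ε)-level matrix. -/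

import Mathlib

/-!
Rows `1, …, m` of `η` form a lower triangular maximal minor whose diagonal entries are powers
of `x`, so `x` lies in every prime `P ⊇ I_m(η)`. Rows `2, …, m + 1` form a maximal minor that is
upper triangular modulo `(x, z)` with powers of `y` on the diagonal, so it does not lie in the
prime `(x, z)`, let alone in `(x)`. Hence `P` strictly contains the height-one prime `(x)`.

For `B`, the maximal minors on the columns shifted by `1`, `2` and (cyclically) `3` are upper
triangular modulo `0`, `(z)` and `(y, z)` with powers of `z`, `y` and `x` on the diagonal. So a
prime `P ⊇ I_{m-2}(B)` contains `z`, then `y`, then `x`, and `0 ⊊ (x) ⊊ (x, y) ⊊ (x, y, z) ⊆ P`.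

Entries below these diagonals are positive powers of the variable killed because `δ` is monotone
and `ε ≥ 1`; the diagonal exponents may vanish, since `x ^ e ∈ P` forces `x ∈ P` for any `e`.
-/

open MvPolynomial

noncomputable def idealHeight {R : Type*} [CommRing R] (I : Ideal R) : ℕ∞ :=
  ⨅ (P : PrimeSpectrum R) (_ : I ≤ P.asIdeal), Order.height P

def minorsIdeal {R : Type*} [CommRing R] {a b : ℕ} (M : Matrix (Fin a) (Fin b) R)
    (t : ℕ) : Ideal R :=
  Ideal.span { d | ∃ (r : Fin t → Fin a) (c : Fin t → Fin b), d = (M.submatrix r c).det }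

/-- The explicit `(m+1) × m` matrix over `k[x,y,z]` of Proposition `exlevel`:
the upper `3 × m` block is lower-bidiagonal with entries `x^{d−δ_j}` on the diagonal and
`y^{d−δ_j}` below it; row `i` of the lower `(m−2) × m` block `B` (for `i` not the last
row, `0`-based) has entries `z^{β}, y^{β}, x^{β}` in columns `i+1, i+2, i+3` (with
`β_{i,j} = δ_{i+2} − δ_j + ε_i`), and the last row has `x^{β}` in column `0`, `z^{β}` in
column `m−2` and `y^{β}` in column `m−1`; all other entries vanish.
(`X 0 = x`, `X 1 = y`, `X 2 = z`; indices `0`-based.) -/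
noncomputable def etaEx {k : Type*} [CommRing k] (d m : ℕ) (hm : 3 ≤ m) (δ : Fin m → ℕ)
    (ε : Fin (m - 2) → ℕ) : Matrix (Fin (m + 1)) (Fin m) (MvPolynomial (Fin 3) k) :=
  Matrix.of fun i j =>
    if _h3 : (i : ℕ) < 3 then
      if (j : ℕ) = (i : ℕ) then X 0 ^ (d - δ j)
      else if (j : ℕ) + 1 = (i : ℕ) then X 1 ^ (d - δ j)
      else 0
    else
      if (i : ℕ) - 3 = m - 3 then
        if (j : ℕ) = 0 then
          X 0 ^ (δ ⟨(i : ℕ) - 1, by have := i.isLt; omega⟩ +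
            ε ⟨(i : ℕ) - 3, by have := i.isLt; omega⟩ - δ j)
        else if (j : ℕ) = m - 2 then
          X 2 ^ (δ ⟨(i : ℕ) - 1, by have := i.isLt; omega⟩ +
            ε ⟨(i : ℕ) - 3, by have := i.isLt; omega⟩ - δ j)
        else if (j : ℕ) = m - 1 then
          X 1 ^ (δ ⟨(i : ℕ) - 1, by have := i.isLt; omega⟩ +
            ε ⟨(i : ℕ) - 3, by have := i.isLt; omega⟩ - δ j)
        else 0
      else
        if (j : ℕ) = (i : ℕ) - 2 then
          X 2 ^ (δ ⟨(i : ℕ) - 1, by have := i.isLt; omega⟩ +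
            ε ⟨(i : ℕ) - 3, by have := i.isLt; omega⟩ - δ j)
        else if (j : ℕ) = (i : ℕ) - 1 then
          X 1 ^ (δ ⟨(i : ℕ) - 1, by have := i.isLt; omega⟩ +
            ε ⟨(i : ℕ) - 3, by have := i.isLt; omega⟩ - δ j)
        else if (j : ℕ) = (i : ℕ) then
          X 0 ^ (δ ⟨(i : ℕ) - 1, by have := i.isLt; omega⟩ +
            ε ⟨(i : ℕ) - 3, by have := i.isLt; omega⟩ - δ j)
        else 0

namespace MvPolynomial

variable {σ R : Type*} [CommRing R]

theorem isPrime_span_X_image [IsDomain R] (s : Set σ) :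
    (Ideal.span (X '' s : Set (MvPolynomial σ R))).IsPrime := by
  classical
  set I := Ideal.span (X '' s : Set (MvPolynomial σ R))
  let φ : MvPolynomial σ R →ₐ[R] MvPolynomial σ R := aeval fun i => if i ∈ s then 0 else X i
  have hX (i : σ) : X i - φ (X i) ∈ I := by
    by_cases hi : i ∈ s
    · simpa [φ, hi] using (Ideal.subset_span ⟨i, hi, rfl⟩ : X i ∈ I)
    · simp [φ, hi]
  have hsub (f : MvPolynomial σ R) : f - φ f ∈ I := by
    induction f using MvPolynomial.induction_on with
    | C a => simp
    | add p q hp hq => simpa [map_add, add_sub_add_comm] using I.add_mem hp hq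
    | mul_X p i hp =>
      have : p * X i - φ (p * X i) = (p - φ p) * X i + φ p * (X i - φ (X i)) := by
        rw [map_mul]; ring
      rw [this]
      exact I.add_mem (I.mul_mem_right _ hp) (I.mul_mem_left _ (hX i))
  have hker : I = RingHom.ker φ := by
    refine le_antisymm (Ideal.span_le.mpr ?_) fun f hf => ?_
    · rintro _ ⟨i, hi, rfl⟩
      simp [φ, hi]
    · simpa [(RingHom.mem_ker).mp hf] using hsub f
  rw [hker]
  exact RingHom.ker_isPrime _

theorem X_mem_span_X_image_iff [Nontrivial R] {s : Set σ} {i : σ} :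
    (X i : MvPolynomial σ R) ∈ Ideal.span (X '' s) ↔ i ∈ s := by
  simp [mem_ideal_span_X_image, support_X, Finsupp.single_apply_ne_zero]

theorem card_le_height_of_X_mem [IsDomain R] (s : Finset σ) (P : PrimeSpectrum (MvPolynomial σ R))
    (hP : ∀ i ∈ s, X i ∈ P.asIdeal) : (s.card : ℕ∞) ≤ Order.height P := by
  classical
  induction s using Finset.induction_on generalizing P with
  | empty => simp
  | insert a t ha ih =>
    let Q : PrimeSpectrum (MvPolynomial σ R) := ⟨_, isPrime_span_X_image (t : Set σ)⟩
    have hQP : Q < P := by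
      refine lt_of_le_of_ne (Ideal.span_le.mpr ?_) fun h => ha ?_
      · rintro _ ⟨i, hi, rfl⟩
        exact hP i (Finset.mem_insert_of_mem hi)
      · have : (X a : MvPolynomial σ R) ∈ Q.asIdeal := h ▸ hP a (Finset.mem_insert_self a t)
        exact_mod_cast X_mem_span_X_image_iff.mp this
    rw [Finset.card_insert_of_notMem ha, Nat.cast_add_one]
    exact (add_le_add_left (ih Q fun i hi => Ideal.subset_span ⟨i, hi, rfl⟩) 1).trans
      (Order.height_add_one_le hQP)

end MvPolynomial

theorem Matrix.exists_diag_mem_of_det_mem {R ι : Type*} [CommRing R] [Fintype ι] [LinearOrder ι]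
    {P : Ideal R} [P.IsPrime] {M : Matrix ι ι R} (h : M.det ∈ P)
    (hM : ∀ i j, j < i → M i j ∈ P) : ∃ i, M i i ∈ P := by
  have htri : (M.map (Ideal.Quotient.mk P)).BlockTriangular id := fun i j hij =>
    Ideal.Quotient.eq_zero_iff_mem.mpr (hM i j hij)
  have h0 : (M.map (Ideal.Quotient.mk P)).det = 0 := by
    rw [← RingHom.mapMatrix_apply, ← RingHom.map_det, Ideal.Quotient.eq_zero_iff_mem.mpr h]
  rw [Matrix.det_of_isUpperTriangular htri, Finset.prod_eq_zero_iff] at h0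
  obtain ⟨i, -, hi⟩ := h0
  exact ⟨i, Ideal.Quotient.eq_zero_iff_mem.mp hi⟩

theorem Matrix.mem_of_det_mem_of_diag_eq_pow {R ι : Type*} [CommRing R] [Fintype ι]
    [LinearOrder ι] {P : Ideal R} [P.IsPrime] {M : Matrix ι ι R} {a : R}
    (h : M.det ∈ P) (hM : ∀ i j, j < i → M i j ∈ P) (hdiag : ∀ i, ∃ e, M i i = a ^ e) :
    a ∈ P := by
  obtain ⟨i, hi⟩ := Matrix.exists_diag_mem_of_det_mem h hM
  obtain ⟨e, he⟩ := hdiag i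
  exact Ideal.IsPrime.mem_of_pow_mem inferInstance e (he ▸ hi)

theorem det_submatrix_mem_minorsIdeal {R : Type*} [CommRing R] {a b t : ℕ}
    (M : Matrix (Fin a) (Fin b) R) (r : Fin t → Fin a) (c : Fin t → Fin b) :
    (M.submatrix r c).det ∈ minorsIdeal M t :=
  Ideal.subset_span ⟨r, c, rfl⟩

theorem le_idealHeight {R : Type*} [CommRing R] {I : Ideal R} {n : ℕ∞}
    (h : ∀ P : PrimeSpectrum R, I ≤ P.asIdeal → n ≤ Order.height P) : n ≤ idealHeight I :=
  le_iInf₂ h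

section etaEx

/-- The exponent `β_{r,j}` of the statement, with `0`-based row index `r`. -/
def etaExExp {m : ℕ} (δ : Fin m → ℕ) (ε : Fin (m - 2) → ℕ) (r : Fin (m - 2)) (j : Fin m) : ℕ :=
  δ ⟨r + 2, by omega⟩ + ε r - δ j

noncomputable def etaExLower {k : Type*} [CommRing k] (d m : ℕ) (hm : 3 ≤ m) (δ : Fin m → ℕ)
    (ε : Fin (m - 2) → ℕ) : Matrix (Fin (m - 2)) (Fin m) (MvPolynomial (Fin 3) k) :=
  (etaEx d m hm δ ε).submatrix (fun r => ⟨r + 3, by omega⟩) id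

variable {k : Type*} [CommRing k] {d m : ℕ} {hm : 3 ≤ m} {δ : Fin m → ℕ} {ε : Fin (m - 2) → ℕ}

theorem X_pow_etaExExp_mem (hδ : Monotone δ) (hε : ∀ r, 1 ≤ ε r)
    {I : Ideal (MvPolynomial (Fin 3) k)} {v : Fin 3} (hv : X v ∈ I) {r : Fin (m - 2)}
    {j : Fin m} (hj : (j : ℕ) ≤ r + 2) : X v ^ etaExExp δ ε r j ∈ I := by
  refine Ideal.pow_mem_of_mem _ hv _ ?_
  have := hδ (show j ≤ ⟨r + 2, by omega⟩ from hj)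
  have := hε r
  unfold etaExExp
  omega

theorem etaEx_apply_of_lt_three {i : Fin (m + 1)} (hi : (i : ℕ) < 3) (j : Fin m) :
    etaEx (k := k) d m hm δ ε i j =
      if (j : ℕ) = i then X 0 ^ (d - δ j)
      else if (j : ℕ) + 1 = i then X 1 ^ (d - δ j)
      else 0 := by
  simp only [etaEx, Matrix.of_apply, dif_pos hi]

theorem etaEx_apply_of_eq_add_three {i : Fin (m + 1)} {r : Fin (m - 2)} (hi : (i : ℕ) = r + 3)
    (j : Fin m) :
    etaEx (k := k) d m hm δ ε i j =
      if (r : ℕ) = m - 3 then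
        if (j : ℕ) = 0 then X 0 ^ etaExExp δ ε r j
        else if (j : ℕ) = m - 2 then X 2 ^ etaExExp δ ε r j
        else if (j : ℕ) = m - 1 then X 1 ^ etaExExp δ ε r j
        else 0
      else
        if (j : ℕ) = r + 1 then X 2 ^ etaExExp δ ε r j
        else if (j : ℕ) = r + 2 then X 1 ^ etaExExp δ ε r j
        else if (j : ℕ) = r + 3 then X 0 ^ etaExExp δ ε r j
        else 0 := by
  obtain ⟨i, _⟩ := i
  dsimp only at hi
  subst hi
  simp [etaEx, etaExExp]

theorem etaExLower_apply (r : Fin (m - 2)) (j : Fin m) :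
    etaExLower (k := k) d m hm δ ε r j =
      if (r : ℕ) = m - 3 then
        if (j : ℕ) = 0 then X 0 ^ etaExExp δ ε r j
        else if (j : ℕ) = m - 2 then X 2 ^ etaExExp δ ε r j
        else if (j : ℕ) = m - 1 then X 1 ^ etaExExp δ ε r j
        else 0
      else
        if (j : ℕ) = r + 1 then X 2 ^ etaExExp δ ε r j
        else if (j : ℕ) = r + 2 then X 1 ^ etaExExp δ ε r j
        else if (j : ℕ) = r + 3 then X 0 ^ etaExExp δ ε r j
        else 0 := by
  rw [etaExLower, Matrix.submatrix_apply]
  exact etaEx_apply_of_eq_add_three rfl j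

theorem etaEx_castSucc_apply_eq_zero {i j : Fin m} (h : i < j) :
    etaEx (k := k) d m hm δ ε i.castSucc j = 0 := by
  rw [Fin.lt_def] at h
  by_cases hi : (i : ℕ) < 3
  · rw [etaEx_apply_of_lt_three hi, Fin.val_castSucc]
    split_ifs <;> first | rfl | omega
  · obtain ⟨r, hr⟩ : ∃ r : Fin (m - 2), (i : ℕ) = r + 3 := ⟨⟨i - 3, by omega⟩, by simp; omega⟩
    rw [etaEx_apply_of_eq_add_three hr]
    split_ifs <;> first | rfl | omega

theorem exists_etaEx_castSucc_self_eq_pow (i : Fin m) :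
    ∃ e, etaEx (k := k) d m hm δ ε i.castSucc i = X 0 ^ e := by
  by_cases hi : (i : ℕ) < 3
  · rw [etaEx_apply_of_lt_three hi, Fin.val_castSucc]
    split_ifs <;> first | exact ⟨_, rfl⟩ | omega
  · obtain ⟨r, hr⟩ : ∃ r : Fin (m - 2), (i : ℕ) = r + 3 := ⟨⟨i - 3, by omega⟩, by simp; omega⟩
    rw [etaEx_apply_of_eq_add_three hr]
    split_ifs <;> first | exact ⟨_, rfl⟩ | omega

theorem etaEx_succ_apply_mem_of_lt (hδ : Monotone δ) (hε : ∀ r, 1 ≤ ε r) {i j : Fin m}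
    (h : j < i) : etaEx (k := k) d m hm δ ε i.succ j ∈ Ideal.span (X '' {0, 2}) := by
  rw [Fin.lt_def] at h
  by_cases hi : (i : ℕ) < 2
  · rw [etaEx_apply_of_lt_three (show (i : ℕ) + 1 < 3 by omega), Fin.val_succ]
    split_ifs <;> first | exact zero_mem _ | omega
  · obtain ⟨r, hr⟩ : ∃ r : Fin (m - 2), (i : ℕ) + 1 = r + 3 :=
      ⟨⟨i - 2, by omega⟩, by simp; omega⟩
    rw [etaEx_apply_of_eq_add_three hr]
    split_ifs <;> first | exact zero_mem _ | omega |
      exact X_pow_etaExExp_mem hδ hε (Ideal.subset_span (Set.mem_image_of_mem X (by simp)))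
        (by omega)

theorem exists_etaEx_succ_self_eq_pow (i : Fin m) :
    ∃ e, etaEx (k := k) d m hm δ ε i.succ i = X 1 ^ e := by
  by_cases hi : (i : ℕ) < 2
  · rw [etaEx_apply_of_lt_three (show (i : ℕ) + 1 < 3 by omega), Fin.val_succ]
    split_ifs <;> first | exact ⟨_, rfl⟩ | omega
  · obtain ⟨r, hr⟩ : ∃ r : Fin (m - 2), (i : ℕ) + 1 = r + 3 :=
      ⟨⟨i - 2, by omega⟩, by simp; omega⟩
    rw [etaEx_apply_of_eq_add_three hr]
    split_ifs <;> first | exact ⟨_, rfl⟩ | omega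

theorem X_zero_mem_of_minorsIdeal_etaEx_le {P : Ideal (MvPolynomial (Fin 3) k)} [P.IsPrime]
    (hP : minorsIdeal (etaEx d m hm δ ε) m ≤ P) : X 0 ∈ P := by
  have hdet := hP (det_submatrix_mem_minorsIdeal _ Fin.castSucc id)
  rw [← Matrix.det_transpose] at hdet
  refine Matrix.mem_of_det_mem_of_diag_eq_pow hdet (fun i j hji => ?_)
    (exists_etaEx_castSucc_self_eq_pow (hm := hm))
  simp [etaEx_castSucc_apply_eq_zero hji]

theorem det_etaEx_succ_notMem [IsDomain k] (hδ : Monotone δ) (hε : ∀ r, 1 ≤ ε r) :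
    ((etaEx (k := k) d m hm δ ε).submatrix Fin.succ id).det ∉ Ideal.span (X '' {0, 2}) := by
  intro hdet
  have : (Ideal.span (X '' {0, 2} : Set (MvPolynomial (Fin 3) k))).IsPrime :=
    isPrime_span_X_image _
  have hy := Matrix.mem_of_det_mem_of_diag_eq_pow hdet
    (fun _ _ => etaEx_succ_apply_mem_of_lt (hm := hm) hδ hε)
    (exists_etaEx_succ_self_eq_pow (hm := hm))
  simp [X_mem_span_X_image_iff] at hy

theorem two_le_height_of_minorsIdeal_etaEx_le [IsDomain k] (hδ : Monotone δ)
    (hε : ∀ r, 1 ≤ ε r) (P : PrimeSpectrum (MvPolynomial (Fin 3) k))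
    (hP : minorsIdeal (etaEx d m hm δ ε) m ≤ P.asIdeal) : 2 ≤ Order.height P := by
  let Q : PrimeSpectrum (MvPolynomial (Fin 3) k) := ⟨_, isPrime_span_X_image {0}⟩
  have hdet : ((etaEx d m hm δ ε).submatrix Fin.succ id).det ∈ P.asIdeal :=
    hP (det_submatrix_mem_minorsIdeal _ _ _)
  have hQP : Q < P := by
    refine lt_of_le_of_ne ?_ fun hQ => ?_
    · rw [← PrimeSpectrum.asIdeal_le_asIdeal]
      simpa [Q, Ideal.span_le] using X_zero_mem_of_minorsIdeal_etaEx_le hP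
    · have : Q.asIdeal ≤ Ideal.span (X '' {0, 2}) := Ideal.span_mono (Set.image_mono (by simp))
      exact det_etaEx_succ_notMem hδ hε (this (hQ ▸ hdet))
  calc (2 : ℕ∞) = 1 + 1 := rfl
    _ ≤ Order.height Q + 1 := by
      gcongr
      simpa using card_le_height_of_X_mem {0} Q (by simp [Q])
    _ ≤ Order.height P := Order.height_add_one_le hQP

theorem X_two_mem_of_minorsIdeal_etaExLower_le {P : Ideal (MvPolynomial (Fin 3) k)} [P.IsPrime]
    (hP : minorsIdeal (etaExLower d m hm δ ε) (m - 2) ≤ P) : X 2 ∈ P := by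
  refine Matrix.mem_of_det_mem_of_diag_eq_pow
    (hP (det_submatrix_mem_minorsIdeal _ id fun s => ⟨s + 1, by have := s.isLt; omega⟩))
    (fun r s hsr => ?_) fun r => ?_
  all_goals
    have := r.isLt
    rw [Matrix.submatrix_apply, etaExLower_apply]
    dsimp only [id, Fin.val_mk]
  · rw [Fin.lt_def] at hsr
    split_ifs <;> first | exact zero_mem _ | contradiction | omega
  · split_ifs <;> first | exact ⟨_, rfl⟩ | contradiction | omega

theorem X_one_mem_of_minorsIdeal_etaExLower_le {P : Ideal (MvPolynomial (Fin 3) k)} [P.IsPrime]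
    (hδ : Monotone δ) (hε : ∀ r, 1 ≤ ε r)
    (hP : minorsIdeal (etaExLower d m hm δ ε) (m - 2) ≤ P) (hz : X 2 ∈ P) : X 1 ∈ P := by
  refine Matrix.mem_of_det_mem_of_diag_eq_pow
    (hP (det_submatrix_mem_minorsIdeal _ id fun s => ⟨s + 2, by have := s.isLt; omega⟩))
    (fun r s hsr => ?_) fun r => ?_
  all_goals
    have := r.isLt
    rw [Matrix.submatrix_apply, etaExLower_apply]
    dsimp only [id, Fin.val_mk]
  · rw [Fin.lt_def] at hsr
    split_ifs <;> first | exact zero_mem _ | contradiction | omega |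
      (refine X_pow_etaExExp_mem hδ hε hz ?_; dsimp only [Fin.val_mk]; omega)
  · split_ifs <;> first | exact ⟨_, rfl⟩ | contradiction | omega

theorem X_zero_mem_of_minorsIdeal_etaExLower_le {P : Ideal (MvPolynomial (Fin 3) k)} [P.IsPrime]
    (hδ : Monotone δ) (hε : ∀ r, 1 ≤ ε r)
    (hP : minorsIdeal (etaExLower d m hm δ ε) (m - 2) ≤ P) (hy : X 1 ∈ P) (hz : X 2 ∈ P) :
    X 0 ∈ P := by
  refine Matrix.mem_of_det_mem_of_diag_eq_pow
    (hP (det_submatrix_mem_minorsIdeal _ id fun s =>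
      ⟨if (s : ℕ) = m - 3 then 0 else s + 3, by have := s.isLt; split_ifs <;> omega⟩))
    (fun r s hsr => ?_) fun r => ?_
  all_goals
    have := r.isLt
    rw [Matrix.submatrix_apply, etaExLower_apply]
    dsimp only [id, Fin.val_mk]
  · rw [Fin.lt_def] at hsr
    split_ifs <;> first | exact zero_mem _ | contradiction | omega |
      (refine X_pow_etaExExp_mem hδ hε hz ?_; dsimp only [Fin.val_mk]; omega) |
      (refine X_pow_etaExExp_mem hδ hε hy ?_; dsimp only [Fin.val_mk]; omega)
  · split_ifs <;> first | exact ⟨_, rfl⟩ | contradiction | omega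

theorem three_le_height_of_minorsIdeal_etaExLower_le [IsDomain k] (hδ : Monotone δ)
    (hε : ∀ r, 1 ≤ ε r) (P : PrimeSpectrum (MvPolynomial (Fin 3) k))
    (hP : minorsIdeal (etaExLower d m hm δ ε) (m - 2) ≤ P.asIdeal) : 3 ≤ Order.height P := by
  have hz := X_two_mem_of_minorsIdeal_etaExLower_le hP
  have hy := X_one_mem_of_minorsIdeal_etaExLower_le hδ hε hP hz
  have hx := X_zero_mem_of_minorsIdeal_etaExLower_le hδ hε hP hy hz
  simpa using card_le_height_of_X_mem Finset.univ P fun i _ => by fin_cases i <;> assumption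

end etaEx

/-- For latent data `(d,m,δ,ε)` satisfying additionally `δ_{i+2} − δ_{i+3} + ε_i > 0`
for all `1 ≤ i ≤ m−3`, the explicit matrix `etaEx` above satisfies `ht I_m(η) ≥ 2` and
`ht I_{m−2}(B) ≥ 3` (so it is a `(d,m,δ,ε)`-level matrix). -/
theorem etaEx_is_level {k : Type*} [Field k]
    (d m : ℕ) (hm : 3 ≤ m)
    (δ : Fin m → ℕ) (ε : Fin (m - 2) → ℕ)
    (hδmono : Monotone δ) (hε : ∀ i, 1 ≤ ε i)
    (B : Matrix (Fin (m - 2)) (Fin m) (MvPolynomial (Fin 3) k))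
    (hB : ∀ (i : Fin (m - 2)) (j : Fin m),
      B i j = etaEx d m hm δ ε ⟨(i : ℕ) + 3, by have := i.isLt; omega⟩ j) :
    2 ≤ idealHeight (minorsIdeal (etaEx (k := k) d m hm δ ε) m) ∧
      3 ≤ idealHeight (minorsIdeal B (m - 2)) := by
  obtain rfl : B = etaExLower d m hm δ ε := Matrix.ext hB
  exact ⟨le_idealHeight (two_le_height_of_minorsIdeal_etaEx_le hδmono hε),
    le_idealHeight (three_le_height_of_minorsIdeal_etaExLower_le hδmono hε)⟩
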